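/- Let $k$ be a field of characteristic $p>3$, $n=2r$, and $B_n$ the truncated polynomial ring with Poisson bracket. The Lie center of $B_n$, namely $\{f \in B_n \mid [f,g]=0 \text{ for all } g \in B_n\}$, coincides with the scalars $k$. -/

import Mathlib

open MvPolynomial

set_option synthInstance.maxHeartbeats 1000000
set_option maxHeartbeats 1000000

noncomputable section

variable (k : Type) [Field k] (p n : ℕ)

/-- The ideal `⟨x₁^p, …, xₙ^p⟩` of the polynomial ring. -/
def truncIdeal : Ideal (MvPolynomial (Fin n) k) :=
  Ideal.span (Set.range fun i : Fin n => (X i : MvPolynomial (Fin n) k) ^ p)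

/-- The truncated polynomial ring `Bₙ = k[x₁,…,xₙ]/⟨xᵢ^p⟩`. -/
abbrev TruncPoly := MvPolynomial (Fin n) k ⧸ truncIdeal k p n

/-- The canonical projection `k[x]→ Bₙ`, as a `k`-algebra homomorphism. -/
def Bmk : MvPolynomial (Fin n) k →ₐ[k] TruncPoly k p n :=
  Ideal.Quotient.mkₐ k (truncIdeal k p n)

theorem Bmk_surjective : Function.Surjective (Bmk k p n) :=
  Ideal.Quotient.mkₐ_surjective k _

/-- The class of the variable `xᵢ` in `Bₙ`. -/
def mkX (i : Fin n) : TruncPoly k p n := Bmk k p n (X i)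

theorem pderiv_mem [CharP k p] (i : Fin n) {f : MvPolynomial (Fin n) k}
    (hf : f ∈ truncIdeal k p n) : pderiv i f ∈ truncIdeal k p n := by
  induction hf using Submodule.span_induction with
  | mem x hx =>
      obtain ⟨j, rfl⟩ := hx
      have h0 : (pderiv i) ((X j : MvPolynomial (Fin n) k) ^ p) = 0 := by
        rw [(pderiv i).leibniz_pow]
        have : (p : MvPolynomial (Fin n) k) = 0 := CharP.cast_eq_zero _ p
        rw [nsmul_eq_mul, this, zero_mul]
      rw [h0]; exact Ideal.zero_mem _
  | zero => simpa using Ideal.zero_mem _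
  | add x y hx hy ihx ihy => simpa [map_add] using Ideal.add_mem _ ihx ihy
  | smul c x hx ih =>
      rw [smul_eq_mul, (pderiv i).leibniz]
      exact Ideal.add_mem _ (Submodule.smul_mem _ _ ih)
        (by rw [smul_eq_mul, mul_comm]; exact Ideal.mul_mem_left _ _ hx)

/-- The partial derivative `∂ᵢ`, descended to the truncated polynomial ring. -/
def pd [CharP k p] (i : Fin n) : TruncPoly k p n → TruncPoly k p n :=
  fun f => Quotient.liftOn' f (fun g => Bmk k p n (pderiv i g)) (by
    intro a b hab
    have h : a - b ∈ truncIdeal k p n := by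
      rwa [Submodule.quotientRel_def] at hab
    have h2 := pderiv_mem k p n i h
    rw [map_sub] at h2
    have : Bmk k p n (pderiv i a) - Bmk k p n (pderiv i b) = 0 := by
      rw [← map_sub]
      exact (Ideal.Quotient.eq_zero_iff_mem).mpr h2
    exact sub_eq_zero.mp this)

@[simp] theorem pd_mk [CharP k p] (i : Fin n) (g : MvPolynomial (Fin n) k) :
    pd k p n i (Bmk k p n g) = Bmk k p n (pderiv i g) := rfl

/-- `∂ᵢ` as a `k`-derivation of `Bₙ`. -/
def pdD [CharP k p] (i : Fin n) :
    Derivation k (TruncPoly k p n) (TruncPoly k p n) where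
  toFun := pd k p n i
  map_add' := by
    intro a b
    obtain ⟨x, rfl⟩ := Bmk_surjective k p n a
    obtain ⟨y, rfl⟩ := Bmk_surjective k p n b
    show Bmk k p n (pderiv i (x + y)) = Bmk k p n (pderiv i x) + Bmk k p n (pderiv i y)
    rw [map_add, map_add]
  map_smul' := by
    intro c a
    obtain ⟨x, rfl⟩ := Bmk_surjective k p n a
    show Bmk k p n (pderiv i (c • x)) = c • Bmk k p n (pderiv i x)
    rw [(pderiv i).map_smul, map_smul]
  map_one_eq_zero' := by
    show Bmk k p n (pderiv i 1) = 0
    simp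
  leibniz' := by
    intro a b
    obtain ⟨x, rfl⟩ := Bmk_surjective k p n a
    obtain ⟨y, rfl⟩ := Bmk_surjective k p n b
    show Bmk k p n (pderiv i (x * y)) =
      Bmk k p n x * Bmk k p n (pderiv i y) + Bmk k p n y * Bmk k p n (pderiv i x)
    rw [(pderiv i).leibniz]
    simp only [smul_eq_mul, map_add, map_mul]

@[simp] theorem pdD_apply [CharP k p] (i : Fin n) (f : TruncPoly k p n) :
    pdD k p n i f = pd k p n i f := rfl

/-- The maximal ideal `𝔪 = (x₁,…,xₙ)` of `Bₙ`. -/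
def mIdeal : Ideal (TruncPoly k p n) := Ideal.span (Set.range (mkX k p n))

/-- Evaluation at the origin `κ : Bₙ → k`. -/
def kappa (hp : 0 < p) : TruncPoly k p n →ₐ[k] k :=
  Ideal.Quotient.liftₐ (truncIdeal k p n) (aeval (0 : Fin n → k)) (by
    intro a ha
    have h : truncIdeal k p n ≤ RingHom.ker
        (aeval (0 : Fin n → k) : MvPolynomial (Fin n) k →ₐ[k] k).toRingHom := by
      rw [truncIdeal, Ideal.span_le]
      rintro _ ⟨j, rfl⟩
      simp [RingHom.mem_ker, zero_pow hp.ne']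
    exact h ha)

variable (r : ℕ)

/-- For `i < r`, the index of `xᵢ` among the `2r` variables. -/
def idx1 (i : Fin r) : Fin (2 * r) := ⟨i, by omega⟩

/-- For `i < r`, the index of `x_{i+r}` among the `2r` variables. -/
def idx2 (i : Fin r) : Fin (2 * r) := ⟨i + r, by omega⟩

/-- The Hamiltonian derivation `D_H(f) = ∑ᵢ (∂ᵢ(f)∂_{i+r} - ∂_{i+r}(f)∂ᵢ)`. -/
def DH [CharP k p] (f : TruncPoly k p (2 * r)) :
    Derivation k (TruncPoly k p (2 * r)) (TruncPoly k p (2 * r)) :=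
  ∑ i : Fin r,
    (pd k p (2 * r) (idx1 r i) f • pdD k p (2 * r) (idx2 r i)
      - pd k p (2 * r) (idx2 r i) f • pdD k p (2 * r) (idx1 r i))

/-- The Poisson bracket `[f,g] = D_H(f)(g)` on `B_{2r}`. -/
def pbr [CharP k p] (f g : TruncPoly k p (2 * r)) : TruncPoly k p (2 * r) :=
  DH k p r f g

/-- The image `Hₙ' = D_H(Bₙ)` of the Hamiltonian map, as a `k`-subspace of
derivations (it equals the span of the range of the linear map `D_H`). -/
def HnP [CharP k p] :
    Submodule k (Derivation k (TruncPoly k p (2 * r)) (TruncPoly k p (2 * r))) :=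
  Submodule.span k (Set.range (DH k p r))

/-- The substitution `x_j ↦ x_{r+j}`, as a map `B_r → B_{2r}`. -/
def shiftHom : TruncPoly k p r →ₐ[k] TruncPoly k p (2 * r) :=
  Ideal.Quotient.liftₐ (truncIdeal k p r)
    ((Bmk k p (2 * r)).comp (rename (idx2 r))) (by
      intro a ha
      have h : truncIdeal k p r ≤ RingHom.ker
          (((Bmk k p (2 * r)).comp (rename (idx2 r))).toRingHom) := by
        rw [truncIdeal, Ideal.span_le]
        rintro _ ⟨j, rfl⟩
        have : ((Bmk k p (2 * r)).comp (rename (idx2 r))) ((X j : MvPolynomial (Fin r) k) ^ p)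
            = Bmk k p (2 * r) ((X (idx2 r j) : MvPolynomial (Fin (2 * r)) k) ^ p) := by
          simp [map_pow]
        simp only [SetLike.mem_coe, RingHom.mem_ker, AlgHom.toRingHom_eq_coe,
          RingHom.coe_coe]
        rw [this]
        exact Ideal.Quotient.eq_zero_iff_mem.mpr (Ideal.subset_span ⟨idx2 r j, rfl⟩)
      exact h ha)

/-- `θ_r : W_r → B_{2r}`, `∑ fᵢ ∂ᵢ ↦ ∑ xᵢ fᵢ(x_{r+1},…,x_{2r})`. -/
def theta [CharP k p]
    (D : Derivation k (TruncPoly k p r) (TruncPoly k p r)) : TruncPoly k p (2 * r) :=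
  ∑ i : Fin r, mkX k p (2 * r) (idx1 r i) * shiftHom k p r (D (mkX k p r i))

/-- `β = D_H ∘ θ_r : W_r → Der(B_{2r})`. -/
def betaMap [CharP k p]
    (D : Derivation k (TruncPoly k p r) (TruncPoly k p r)) :
    Derivation k (TruncPoly k p (2 * r)) (TruncPoly k p (2 * r)) :=
  DH k p r (theta k p r D)

end


/-!
Bracketing `f` with the coordinates gives `[f, x_{i+r}] = ∂ᵢ f` and `[f, xᵢ] = -∂_{i+r} f`, so a
central `f` has all partial derivatives zero in `Bₙ`. Lifting `f` to a polynomial `F`, each `∂ᵢ F`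
then lies in `⟨x_j^p⟩`, i.e. has no monomial with all exponents `< p`. For a monomial `x^m` of `F`
with all `m_j < p` and some `mᵢ ≠ 0`, the coefficient of `x^{m - eᵢ}` in `∂ᵢ F` is `mᵢ` times that
of `x^m`, and `mᵢ` is a unit since `0 < mᵢ < p`; so `F` is constant modulo `⟨x_j^p⟩`. Conversely
scalars are killed by every derivation.
-/

section TruncPoly

variable {k : Type} [Field k] {p n : ℕ}

theorem mem_truncIdeal_iff {F : MvPolynomial (Fin n) k} :
    F ∈ truncIdeal k p n ↔ ∀ m ∈ F.support, ∃ i, p ≤ m i := by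
  have hgen : Set.range (fun i : Fin n => (X i : MvPolynomial (Fin n) k) ^ p) =
      (fun s => monomial s (1 : k)) '' Set.range (fun i => Finsupp.single i p) := by
    rw [← Set.range_comp]
    simp only [Function.comp_def, X_pow_eq_monomial]
  rw [truncIdeal, hgen, mem_ideal_span_monomial_image]
  simp [Finsupp.single_le_iff]

theorem coeff_eq_zero_of_pderiv_mem_truncIdeal [CharP k p] {F : MvPolynomial (Fin n) k}
    {i : Fin n} (hF : pderiv i F ∈ truncIdeal k p n) {m : Fin n →₀ ℕ} (hmi : m i ≠ 0)
    (hm : ∀ j, m j < p) : coeff m F = 0 := by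
  set m' := m - Finsupp.single i 1
  have hm' : m' + Finsupp.single i 1 = m :=
    tsub_add_cancel_of_le (Finsupp.single_le_iff.mpr (Nat.one_le_iff_ne_zero.mpr hmi))
  have hcoeff : coeff m' (pderiv i F) = coeff m F * (m i : k) := by
    rw [coeff_pderiv, hm', ← hm']
    simp
  have hzero : coeff m' (pderiv i F) = 0 := by
    by_contra hne
    obtain ⟨j, hj⟩ := mem_truncIdeal_iff.mp hF m' (mem_support_iff.mpr hne)
    have hmj := hm j
    simp only [m', Finsupp.tsub_apply] at hj
    omega
  have hmi_ne : (m i : k) ≠ 0 := by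
    rw [Ne, CharP.cast_eq_zero_iff k p]
    exact fun hdvd => hmi (Nat.eq_zero_of_dvd_of_lt hdvd (hm i))
  rw [hzero] at hcoeff
  exact (mul_eq_zero.mp hcoeff.symm).resolve_right hmi_ne

theorem sub_C_coeff_zero_mem_truncIdeal [CharP k p] {F : MvPolynomial (Fin n) k}
    (hF : ∀ i, pderiv i F ∈ truncIdeal k p n) : F - C (coeff 0 F) ∈ truncIdeal k p n := by
  refine mem_truncIdeal_iff.mpr fun m hm => ?_
  by_contra! hlt
  have hm0 : m ≠ 0 := by
    rintro rfl
    simp at hm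
  obtain ⟨i, hi⟩ := Finsupp.ne_iff.mp hm0
  rw [mem_support_iff, coeff_sub, coeff_C, if_neg (Ne.symm hm0), sub_zero] at hm
  exact hm (coeff_eq_zero_of_pderiv_mem_truncIdeal (hF i) hi hlt)

theorem pd_mk_eq_zero_iff [CharP k p] (i : Fin n) (F : MvPolynomial (Fin n) k) :
    pd k p n i (Bmk k p n F) = 0 ↔ pderiv i F ∈ truncIdeal k p n := by
  rw [pd_mk, Bmk, Ideal.Quotient.mkₐ_eq_mk, Ideal.Quotient.eq_zero_iff_mem]

theorem exists_eq_algebraMap_of_forall_pd_eq_zero [CharP k p] {f : TruncPoly k p n}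
    (hf : ∀ i, pd k p n i f = 0) : ∃ c : k, f = algebraMap k (TruncPoly k p n) c := by
  obtain ⟨F, rfl⟩ := Bmk_surjective k p n f
  refine ⟨coeff 0 F, ?_⟩
  rw [← (Bmk k p n).commutes, algebraMap_eq, Bmk, Ideal.Quotient.mkₐ_eq_mk,
    Ideal.Quotient.eq]
  exact sub_C_coeff_zero_mem_truncIdeal fun i => (pd_mk_eq_zero_iff i F).mp (hf i)

theorem pd_algebraMap [CharP k p] (i : Fin n) (c : k) :
    pd k p n i (algebraMap k (TruncPoly k p n) c) = 0 :=
  (pdD k p n i).map_algebraMap c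

theorem pd_mkX [CharP k p] (i j : Fin n) :
    pd k p n i (mkX k p n j) = if j = i then 1 else 0 := by
  rw [mkX, pd_mk, pderiv_X, Pi.single_apply, apply_ite (Bmk k p n), map_one, map_zero]

end TruncPoly

section Poisson

variable {k : Type} [Field k] {p r : ℕ}

@[simp] theorem idx1_inj {i j : Fin r} : idx1 r i = idx1 r j ↔ i = j := by
  simp [idx1, Fin.ext_iff]

@[simp] theorem idx2_inj {i j : Fin r} : idx2 r i = idx2 r j ↔ i = j := by
  simp [idx2, Fin.ext_iff]

@[simp] theorem idx1_ne_idx2 (i j : Fin r) : idx1 r i ≠ idx2 r j := by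
  simp only [idx1, idx2, ne_eq, Fin.ext_iff]
  omega

theorem exists_idx1_or_idx2 (i : Fin (2 * r)) : (∃ j, idx1 r j = i) ∨ ∃ j, idx2 r j = i := by
  by_cases hi : (i : ℕ) < r
  · exact Or.inl ⟨⟨i, hi⟩, rfl⟩
  · exact Or.inr ⟨⟨i - r, by omega⟩, Fin.ext (by simp only [idx2]; omega)⟩

theorem pbr_apply [CharP k p] (f g : TruncPoly k p (2 * r)) :
    pbr k p r f g = ∑ i : Fin r,
      (pd k p (2 * r) (idx1 r i) f * pd k p (2 * r) (idx2 r i) g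
        - pd k p (2 * r) (idx2 r i) f * pd k p (2 * r) (idx1 r i) g) := by
  rw [pbr, DH, ← Derivation.coeFnAddMonoidHom_apply, map_sum, Finset.sum_apply]
  simp

theorem pbr_mkX_idx1 [CharP k p] (f : TruncPoly k p (2 * r)) (j : Fin r) :
    pbr k p r f (mkX k p (2 * r) (idx1 r j)) = -pd k p (2 * r) (idx2 r j) f := by
  simp [pbr_apply, pd_mkX]

theorem pbr_mkX_idx2 [CharP k p] (f : TruncPoly k p (2 * r)) (j : Fin r) :
    pbr k p r f (mkX k p (2 * r) (idx2 r j)) = pd k p (2 * r) (idx1 r j) f := by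
  simp [pbr_apply, pd_mkX, (idx1_ne_idx2 _ _).symm]

theorem pd_eq_zero_of_forall_pbr_eq_zero [CharP k p] {f : TruncPoly k p (2 * r)}
    (hf : ∀ g, pbr k p r f g = 0) (i : Fin (2 * r)) : pd k p (2 * r) i f = 0 := by
  rcases exists_idx1_or_idx2 i with ⟨j, rfl⟩ | ⟨j, rfl⟩
  · rw [← pbr_mkX_idx2, hf]
  · rw [← neg_eq_zero, ← pbr_mkX_idx1, hf]

end Poisson

theorem stmt5_general (k : Type) [Field k] (p r : ℕ) [CharP k p] :
    ∀ f : TruncPoly k p (2 * r),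
      (∀ g : TruncPoly k p (2 * r), pbr k p r f g = 0) ↔
        ∃ c : k, f = algebraMap k (TruncPoly k p (2 * r)) c := by
  intro f
  constructor
  · intro hf
    exact exists_eq_algebraMap_of_forall_pd_eq_zero (pd_eq_zero_of_forall_pbr_eq_zero hf)
  · rintro ⟨c, rfl⟩ g
    simp [pbr_apply, pd_algebraMap]

/-- the Lie center of `B_{2r}` for the Poisson bracket is exactly the
scalars `k`. -/
theorem stmt5 (k : Type) [Field k] (p r : ℕ) [CharP k p] (hp : 3 < p) :
    ∀ f : TruncPoly k p (2 * r),
      (∀ g : TruncPoly k p (2 * r), pbr k p r f g = 0) ↔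
        ∃ c : k, f = algebraMap k (TruncPoly k p (2 * r)) c :=
  stmt5_general k p r
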